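/- For μ > 0, if z_μ > 0 satisfies 1/(2z_μ) = ∫_0^∞ (1+h)^{−μ} e^{−h z_μ} dh, then the maximum value of φ_μ equals e^{−z_μ} z_μ^μ / (2 Γ(μ+1)), where φ_μ(z) = (1/Γ(μ+1))·(z^μ e^{−z} − z^{2μ} ∫_z^∞ u^{−μ} e^{−u} du). -/

import Mathlib

open MeasureTheory

/-- `φ_μ(z) = (1/Γ(μ+1)) (z^μ e^{−z} − z^{2μ} ∫_z^∞ u^{−μ} e^{−u} du)`. -/
noncomputable def phiBessel (μ z : ℝ) : ℝ :=
  (1 / Real.Gamma (μ + 1))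
    * (z ^ μ * Real.exp (-z) - z ^ (2 * μ) * ∫ u in Set.Ioi z, u ^ (-μ) * Real.exp (-u))

/-!
With `J(z) = ∫_0^∞ (1+h)^{-μ} e^{-hz} dh`, the substitution `u = z(1+h)` gives
`∫_z^∞ u^{-μ} e^{-u} du = z^{1-μ} e^{-z} J(z)`. Hence
`φ_μ(z) = z^μ e^{-z} (1 - z J(z)) / Γ(μ+1)` and
`φ_μ'(z) = μ z^{μ-1} e^{-z} (1 - 2 z J(z)) / Γ(μ+1)`.
Since `z J(z) = ∫_0^∞ (1 + t/z)^{-μ} e^{-t} dt` increases with `z`, `φ_μ` increases up to the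
point where `z J(z) = 1/2` and decreases after it, so its maximum is `z^μ e^{-z} / (2 Γ(μ+1))`.
-/

open Set Real

theorem isMaxOn_of_deriv_nonneg_of_deriv_nonpos {f : ℝ → ℝ} {a c : ℝ} (hac : a < c)
    (hf : ∀ x ∈ Ioi a, DifferentiableAt ℝ f x)
    (h_left : ∀ x ∈ Ioo a c, 0 ≤ deriv f x) (h_right : ∀ x ∈ Ioi c, deriv f x ≤ 0) :
    IsMaxOn f (Ioi a) c := by
  have hcont : ContinuousOn f (Ioi a) := fun x hx => (hf x hx).continuousAt.continuousWithinAt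
  have hdiff : DifferentiableOn ℝ f (Ioi a) := fun x hx => (hf x hx).differentiableWithinAt
  have hmono : MonotoneOn f (Ioc a c) :=
    monotoneOn_of_deriv_nonneg (convex_Ioc a c) (hcont.mono Ioc_subset_Ioi_self)
      (hdiff.mono (by simpa using Ioo_subset_Ioi_self)) (by simpa using h_left)
  have hanti : AntitoneOn f (Ici c) :=
    antitoneOn_of_deriv_nonpos (convex_Ici c) (hcont.mono (Ici_subset_Ioi.2 hac))
      (hdiff.mono (by simpa using Ioi_subset_Ioi hac.le)) (by simpa using h_right)
  intro x (hx : a < x)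
  rcases le_total x c with hxc | hcx
  · exact hmono ⟨hx, hxc⟩ (right_mem_Ioc.2 hac) hxc
  · exact hanti (le_refl c) hcx hcx

theorem hasDerivAt_integral_Ioi {f : ℝ → ℝ} {a z : ℝ} (haz : a < z)
    (hf : IntegrableOn f (Ioi a)) (hcont : ContinuousAt f z) :
    HasDerivAt (fun w => ∫ u in Ioi w, f u) (-f z) z := by
  have hprim : HasDerivAt (fun w => ∫ u in a..w, f u) (f z) z :=
    intervalIntegral.integral_hasDerivAt_right
      ((intervalIntegrable_iff_integrableOn_Ioc_of_le haz.le).2 (hf.mono_set Ioc_subset_Ioi_self))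
      ⟨Ioi a, Ioi_mem_nhds haz, hf.aestronglyMeasurable⟩ hcont
  refine (hprim.const_sub (∫ u in Ioi a, f u)).congr_of_eventuallyEq ?_
  filter_upwards [Ioi_mem_nhds haz] with w (hw : a < w)
  rw [← intervalIntegral.integral_Ioi_sub_Ioi hf hw.le, sub_sub_cancel]

noncomputable def tailIntegral (μ z : ℝ) : ℝ := ∫ u in Ioi z, u ^ (-μ) * exp (-u)

noncomputable def laplaceIntegral (μ z : ℝ) : ℝ :=
  ∫ h in Ioi (0 : ℝ), (1 + h) ^ (-μ) * exp (-h * z)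

theorem continuousAt_rpow_mul_exp_neg (p : ℝ) {u : ℝ} (hu : u ≠ 0) :
    ContinuousAt (fun u => u ^ p * exp (-u)) u :=
  (continuousAt_rpow_const _ _ (.inl hu)).mul (continuous_exp.comp continuous_neg).continuousAt

theorem integrableOn_rpow_neg_mul_exp_neg (μ : ℝ) {z : ℝ} (hz : 0 < z) :
    IntegrableOn (fun u => u ^ (-μ) * exp (-u)) (Ioi z) := by
  refine integrable_of_isBigO_exp_neg one_half_pos ?_ ?_
  · exact fun u (hu : z ≤ u) =>
      (continuousAt_rpow_mul_exp_neg _ (hz.trans_le hu).ne').continuousWithinAt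
  · simpa only [mul_comm, neg_div] using (Gamma_integrand_isLittleO (-μ)).isBigO

theorem hasDerivAt_tailIntegral (μ : ℝ) {z : ℝ} (hz : 0 < z) :
    HasDerivAt (tailIntegral μ) (-(z ^ (-μ) * exp (-z))) z :=
  hasDerivAt_integral_Ioi (half_lt_self hz) (integrableOn_rpow_neg_mul_exp_neg μ (half_pos hz))
    (continuousAt_rpow_mul_exp_neg _ hz.ne')

theorem integral_Ioi_eq_smul_integral_Ioi_zero {E : Type*} [NormedAddCommGroup E]
    [NormedSpace ℝ E] (g : ℝ → E) {c : ℝ} (hc : 0 < c) :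
    ∫ u in Ioi c, g u = c • ∫ h in Ioi 0, g (c * (1 + h)) := by
  have himage : (fun h => c * (1 + h)) '' Ioi 0 = Ioi c := by
    rw [← image_image (c * ·) (1 + ·), image_const_add_Ioi, image_mul_left_Ioi hc, add_zero,
      mul_one]
  rw [← himage, integral_image_eq_integral_abs_deriv_smul (f := fun h => c * (1 + h))
    (f' := fun _ => c) measurableSet_Ioi
    (fun h _ => by simpa using (((hasDerivAt_id h).const_add 1).const_mul c).hasDerivWithinAt)
    (fun x _ y _ hxy => by simpa [hc.ne'] using hxy), abs_of_pos (by simpa using hc)]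
  exact integral_smul c _

theorem tailIntegral_eq (μ : ℝ) {z : ℝ} (hz : 0 < z) :
    tailIntegral μ z = z ^ (1 - μ) * exp (-z) * laplaceIntegral μ z := by
  have hpoint : ∀ h ∈ Ioi (0 : ℝ), (z * (1 + h)) ^ (-μ) * exp (-(z * (1 + h)))
      = z ^ (-μ) * exp (-z) * ((1 + h) ^ (-μ) * exp (-h * z)) := by
    intro h (hh : 0 < h)
    rw [mul_rpow hz.le (by positivity), show -(z * (1 + h)) = -z + -h * z by ring, exp_add]
    ring
  rw [tailIntegral, integral_Ioi_eq_smul_integral_Ioi_zero _ hz, smul_eq_mul,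
    setIntegral_congr_fun measurableSet_Ioi hpoint, integral_const_mul, laplaceIntegral,
    sub_eq_add_neg, rpow_add hz, rpow_one]
  ring

theorem mul_laplaceIntegral_eq (μ : ℝ) {c : ℝ} (hc : 0 < c) :
    c * laplaceIntegral μ c = ∫ t in Ioi 0, (1 + t / c) ^ (-μ) * exp (-t) := by
  rw [← zero_mul c, ← integral_comp_mul_right_Ioi' _ 0 hc, laplaceIntegral, smul_eq_mul]
  congr 1
  refine setIntegral_congr_fun measurableSet_Ioi fun h _ => ?_
  rw [mul_div_cancel_right₀ h hc.ne', neg_mul]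

theorem monotoneOn_mul_laplaceIntegral {μ : ℝ} (hμ : 0 ≤ μ) :
    MonotoneOn (fun z => z * laplaceIntegral μ z) (Ioi 0) := by
  have hint : ∀ c ∈ Ioi (0 : ℝ),
      IntegrableOn (fun t => (1 + t / c) ^ (-μ) * exp (-t)) (Ioi 0) := by
    intro c (hc : 0 < c)
    refine (integrableOn_exp_neg_Ioi 0).mono' (by fun_prop) ?_
    filter_upwards [ae_restrict_mem measurableSet_Ioi] with t (ht : 0 < t)
    have hbase : 1 ≤ 1 + t / c := le_add_of_nonneg_right (by positivity)
    rw [norm_mul, norm_of_nonneg (by positivity), norm_of_nonneg (exp_pos _).le]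
    exact mul_le_of_le_one_left (exp_pos _).le (rpow_le_one_of_one_le_of_nonpos hbase (by linarith))
  intro a (ha : 0 < a) b (hb : 0 < b) hab
  simp only [mul_laplaceIntegral_eq μ ha, mul_laplaceIntegral_eq μ hb]
  refine setIntegral_mono_on (hint a ha) (hint b hb) measurableSet_Ioi fun t (ht : 0 < t) => ?_
  gcongr (?_ : ℝ) * _
  refine rpow_le_rpow_of_nonpos (by positivity) ?_ (by linarith)
  gcongr

theorem phiBessel_eq (μ : ℝ) {z : ℝ} (hz : 0 < z) :
    phiBessel μ z = z ^ μ * exp (-z) * (1 - z * laplaceIntegral μ z) / Gamma (μ + 1) := by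
  have hpow : z ^ (2 * μ) * z ^ (1 - μ) = z ^ μ * z := by
    rw [← rpow_add hz, ← rpow_add_one hz.ne']
    ring_nf
  rw [phiBessel, ← tailIntegral, tailIntegral_eq μ hz]
  linear_combination (-(exp (-z) * laplaceIntegral μ z) / Gamma (μ + 1)) * hpow

theorem hasDerivAt_phiBessel (μ : ℝ) {z : ℝ} (hz : 0 < z) :
    HasDerivAt (phiBessel μ)
      (μ * z ^ (μ - 1) * exp (-z) / Gamma (μ + 1) * (1 - 2 * (z * laplaceIntegral μ z))) z := by
  have hF := (((hasDerivAt_rpow_const (p := μ) (.inl hz.ne')).mul (hasDerivAt_neg z).exp).sub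
    ((hasDerivAt_rpow_const (p := 2 * μ) (.inl hz.ne')).mul
      (hasDerivAt_tailIntegral μ hz))).const_mul (1 / Gamma (μ + 1))
  refine HasDerivAt.congr_deriv (f := phiBessel μ) hF ?_
  have hpow : z ^ (2 * μ - 1) * z ^ (1 - μ) = z ^ (μ - 1) * z := by
    rw [← rpow_add hz, ← rpow_add_one hz.ne']
    ring_nf
  have hpow' : z ^ (2 * μ) * z ^ (-μ) = z ^ μ := by
    rw [← rpow_add hz]
    ring_nf
  rw [tailIntegral_eq μ hz]
  linear_combination (exp (-z) / Gamma (μ + 1)) * hpow'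
    - (2 * μ * exp (-z) * laplaceIntegral μ z / Gamma (μ + 1)) * hpow

theorem isMaxOn_phiBessel {μ z : ℝ} (hμ : 0 ≤ μ) (hz : 0 < z)
    (hhalf : z * laplaceIntegral μ z = 1 / 2) :
    IsMaxOn (phiBessel μ) (Ioi 0) z := by
  have hcoeff : ∀ x : ℝ, 0 < x → 0 ≤ μ * x ^ (μ - 1) * exp (-x) / Gamma (μ + 1) := fun x hx =>
    div_nonneg (by positivity) (Gamma_pos_of_pos (by linarith)).le
  refine isMaxOn_of_deriv_nonneg_of_deriv_nonpos hz
    (fun x (hx : 0 < x) => (hasDerivAt_phiBessel μ hx).differentiableAt) ?_ ?_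
  · intro x ⟨hx, hxz⟩
    rw [(hasDerivAt_phiBessel μ hx).deriv]
    have hle : x * laplaceIntegral μ x ≤ z * laplaceIntegral μ z :=
      monotoneOn_mul_laplaceIntegral hμ hx hz hxz.le
    exact mul_nonneg (hcoeff x hx) (by linarith)
  · intro x (hzx : z < x)
    have hx := hz.trans hzx
    rw [(hasDerivAt_phiBessel μ hx).deriv]
    have hge : z * laplaceIntegral μ z ≤ x * laplaceIntegral μ x :=
      monotoneOn_mul_laplaceIntegral hμ hz hx hzx.le
    exact mul_nonpos_of_nonneg_of_nonpos (hcoeff x hx) (by linarith)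

/-- For `μ > 0`, if `z_μ > 0` satisfies `1/(2z_μ) = ∫_0^∞ (1+h)^{−μ} e^{−h z_μ} dh`,
then the maximum value of `φ_μ` on `(0,∞)` equals `e^{−z_μ} z_μ^μ / (2 Γ(μ+1))`. -/
theorem max_value_phiBessel (μ : ℝ) (hμ : 0 < μ) (zμ : ℝ) (hz : 0 < zμ)
    (heq : 1 / (2 * zμ) = ∫ h in Set.Ioi (0 : ℝ), (1 + h) ^ (-μ) * Real.exp (-h * zμ)) :
    IsGreatest (phiBessel μ '' Set.Ioi 0)
      (Real.exp (-zμ) * zμ ^ μ / (2 * Real.Gamma (μ + 1))) := by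
  have hhalf : zμ * laplaceIntegral μ zμ = 1 / 2 := by
    rw [laplaceIntegral, ← heq]
    field_simp
  have hvalue : phiBessel μ zμ = Real.exp (-zμ) * zμ ^ μ / (2 * Real.Gamma (μ + 1)) := by
    rw [phiBessel_eq μ hz, hhalf]
    ring
  rw [← hvalue]
  exact ⟨mem_image_of_mem _ hz, forall_mem_image.2 (isMaxOn_phiBessel hμ.le hz hhalf)⟩
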